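/- arXiv:0804.0813 — 2 statements merged into one kernel-verified Lean document; each statement's English description precedes it below -/
import Mathlib

section
/- For α > 2, δ = 2/α, g > 0 and λ > 0, the double integral 2πλ ∫₀^∞ ∫_{(ρ/g)^{1/α}}^∞ r (r^{-α} ρ)² e^{-ρ} dr dρ equals (π Γ(δ+1) λ/(α-1)) · g^{2-δ}. -/
open Real MeasureTheory Set

/-!
For fixed `ρ` the inner integrand is `ρ² r^{1-2α}`, whose tail integral from the threshold
`(ρ/g)^{1/α}` is `g^{2-δ} ρ^δ / (2α - 2)`; the outer integral is then `Γ(δ + 1)` by Euler's integral.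
-/

lemma integral_Ioi_mul_rpow_neg_mul_sq {α a : ℝ} (hα : 1 < α) (ha : 0 < a) (ρ : ℝ) :
    ∫ r in Ioi a, r * (r ^ (-α) * ρ) ^ 2 = ρ ^ 2 * a ^ (2 - 2 * α) / (2 * α - 2) := by
  have hintegrand : EqOn (fun r => r * (r ^ (-α) * ρ) ^ 2)
      (fun r => ρ ^ 2 * r ^ (1 - 2 * α)) (Ioi a) := by
    intro r hr
    have hr : 0 < r := ha.trans hr
    simp only [mul_pow, ← rpow_natCast (r ^ (-α)), ← rpow_mul hr.le,
      show (1 : ℝ) - 2 * α = 1 + -α * (2 : ℕ) by push_cast; ring, rpow_add hr, rpow_one]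
    ring
  rw [setIntegral_congr_fun measurableSet_Ioi hintegrand, integral_const_mul,
    integral_Ioi_rpow_of_lt (by linarith) ha, show (1 : ℝ) - 2 * α + 1 = 2 - 2 * α by ring,
    neg_div, ← div_neg, neg_sub, mul_div_assoc]

lemma sq_mul_div_rpow_one_div_rpow {α g ρ : ℝ} (hα : α ≠ 0) (hg : 0 < g) (hρ : 0 < ρ) :
    ρ ^ 2 * ((ρ / g) ^ (1 / α)) ^ (2 - 2 * α) = g ^ (2 - 2 / α) * ρ ^ (2 / α) := by
  have hexp : 1 / α * (2 - 2 * α) = 2 / α - 2 := by field_simp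
  rw [← rpow_mul (div_pos hρ hg).le, hexp, div_rpow hρ.le hg.le, div_eq_mul_inv,
    ← rpow_neg hg.le, neg_sub, ← rpow_natCast, ← mul_assoc, ← rpow_add hρ]
  push_cast
  ring_nf

lemma integral_Ioi_threshold_mul_rpow_neg_mul_sq {α g ρ : ℝ} (hα : 1 < α) (hg : 0 < g)
    (hρ : 0 < ρ) :
    ∫ r in Ioi ((ρ / g) ^ (1 / α)), r * (r ^ (-α) * ρ) ^ 2
      = g ^ (2 - 2 / α) / (2 * α - 2) * ρ ^ (2 / α) := by
  rw [integral_Ioi_mul_rpow_neg_mul_sq hα (rpow_pos_of_pos (div_pos hρ hg) _),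
    sq_mul_div_rpow_one_div_rpow (zero_lt_one.trans hα).ne' hg hρ]
  ring

lemma integral_Ioi_rpow_mul_exp_neg {s : ℝ} (hs : -1 < s) :
    ∫ x in Ioi (0 : ℝ), x ^ s * exp (-x) = Gamma (s + 1) := by
  simp_rw [Gamma_eq_integral (by linarith : 0 < s + 1), add_sub_cancel_right, mul_comm]

theorem variance_secondary_interference_general
    (α g lam δ : ℝ) (hα : 2 < α) (hg : 0 < g) (hδ : δ = 2 / α) :
    2 * π * lam * ∫ ρ in Ioi (0 : ℝ), ∫ r in Ioi ((ρ / g) ^ (1 / α)),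
        r * (r ^ (-α) * ρ) ^ 2 * Real.exp (-ρ)
      = π * Real.Gamma (δ + 1) * lam / (α - 1) * g ^ (2 - δ) := by
  have hinner : EqOn (fun ρ => ∫ r in Ioi ((ρ / g) ^ (1 / α)),
        r * (r ^ (-α) * ρ) ^ 2 * Real.exp (-ρ))
      (fun ρ => g ^ (2 - δ) / (2 * α - 2) * (ρ ^ δ * Real.exp (-ρ))) (Ioi 0) := by
    intro ρ hρ
    dsimp only
    rw [integral_mul_const, integral_Ioi_threshold_mul_rpow_neg_mul_sq (by linarith) hg hρ, hδ]
    ring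
  have hδ_pos : 0 < δ := hδ ▸ div_pos two_pos (by linarith)
  rw [setIntegral_congr_fun measurableSet_Ioi hinner, integral_const_mul,
    integral_Ioi_rpow_mul_exp_neg (by linarith)]
  have hα₁ : α - 1 ≠ 0 := by linarith
  field_simp

/-- variance of the aggregate secondary interference:
`2πλ ∫₀^∞ ∫_{(ρ/g)^{1/α}}^∞ r (r^{-α} ρ)² e^{-ρ} dr dρ = (π Γ(δ+1) λ/(α-1)) g^{2-δ}`. -/
theorem variance_secondary_interference
    (α g lam δ : ℝ) (hα : 2 < α) (hg : 0 < g) (hlam : 0 < lam) (hδ : δ = 2 / α) :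
    2 * π * lam * ∫ ρ in Ioi (0 : ℝ), ∫ r in Ioi ((ρ / g) ^ (1 / α)),
        r * (r ^ (-α) * ρ) ^ 2 * Real.exp (-ρ)
      = π * Real.Gamma (δ + 1) * lam / (α - 1) * g ^ (2 - δ) :=
  variance_secondary_interference_general α g lam δ hα hg hδ
end

section
/- Let γ(L, x) denote the lower incomplete gamma function and fix constants c₂ > 0, L ≥ 1 a natural number. Then the function P(λ) = E[γ(L, c₂ λ W^{-δ})] / Γ(L), where 0 < δ < 1 and W is a positive random variable with E[W^{-δL}] < ∞, satisfies P(λ) = (c₂^L E[W^{-δL}] / Γ(L+1)) λ^L + O(λ^{L+1}) as λ → 0⁺. -/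
open MeasureTheory ProbabilityTheory Set Filter Asymptotics Real Topology

/-- The lower incomplete gamma function `γ(s, x) = ∫₀^x t^{s-1} e^{-t} dt`. -/
noncomputable def lowerIncGamma (s x : ℝ) : ℝ :=
  ∫ t in Ioo (0 : ℝ) x, t ^ (s - 1) * Real.exp (-t)

/-! For `x ≥ 0` the bounds `1 - t ≤ e^{-t} ≤ 1` under `γ(L, x) = ∫₀^x t^{L-1} e^{-t} dt` give
`|γ(L, x) - x^L / L| ≤ x^{L+1} / (L + 1)`. Substituting `x = c₂ λ W^{-δ}`, taking expectations and
dividing by `Γ(L)`, with `L Γ(L) = Γ(L + 1)`, bounds the error term by an explicit multiple of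
`λ^{L+1}` for every `λ > 0`. -/

lemma lowerIncGamma_nonneg (s x : ℝ) : 0 ≤ lowerIncGamma s x :=
  setIntegral_nonneg measurableSet_Ioo fun _ ht =>
    mul_nonneg (rpow_nonneg ht.1.le _) (exp_pos _).le

lemma measurable_lowerIncGamma (s : ℝ) : Measurable (lowerIncGamma s) := by
  let f : ℝ × ℝ → ℝ := fun p => {q : ℝ × ℝ | q.2 ∈ Ioo 0 q.1}.indicator
    (fun q => q.2 ^ (s - 1) * exp (-q.2)) p
  have hf : StronglyMeasurable f := by
    refine (Measurable.indicator (by fun_prop) ?_).stronglyMeasurable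
    exact (measurableSet_lt measurable_const measurable_snd).inter
      (measurableSet_lt measurable_snd measurable_fst)
  convert (hf.integral_prod_right' (ν := volume)).measurable using 2 with x
  rw [lowerIncGamma, ← integral_indicator measurableSet_Ioo]
  rfl

lemma lowerIncGamma_natCast {L : ℕ} (hL : 0 < L) {x : ℝ} (hx : 0 ≤ x) :
    lowerIncGamma L x = ∫ t in 0..x, t ^ (L - 1) * exp (-t) := by
  rw [lowerIncGamma, intervalIntegral.integral_of_le hx, integral_Ioc_eq_integral_Ioo]
  refine setIntegral_congr_fun measurableSet_Ioo fun t _ => ?_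
  rw [← Nat.cast_one, ← Nat.cast_sub hL, rpow_natCast]

lemma abs_lowerIncGamma_natCast_sub_le {L : ℕ} (hL : 0 < L) {x : ℝ} (hx : 0 ≤ x) :
    |lowerIncGamma L x - x ^ L / L| ≤ x ^ (L + 1) / (L + 1) := by
  have hmain : x ^ L / L = ∫ t in 0..x, t ^ (L - 1) := by
    rw [integral_pow, Nat.sub_add_cancel hL, Nat.cast_sub hL]; simp [zero_pow hL.ne']
  have hrem : x ^ (L + 1) / (L + 1) = ∫ t in 0..x, t ^ (L - 1) * t := by
    simp_rw [← pow_succ, integral_pow, Nat.sub_add_cancel hL]; simp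
  have hcont : Continuous fun t : ℝ => t ^ (L - 1) * exp (-t) := by fun_prop
  rw [lowerIncGamma_natCast hL hx, hmain, hrem, ← intervalIntegral.integral_sub
    (hcont.intervalIntegrable 0 x) ((continuous_pow _).intervalIntegrable 0 x), ← norm_eq_abs]
  refine intervalIntegral.norm_integral_le_of_norm_le hx (ae_of_all _ fun t ht => ?_)
    (((continuous_pow _).mul continuous_id).intervalIntegrable 0 x)
  have ht0 : 0 ≤ t := ht.1.le
  have h1 : exp (-t) ≤ 1 := exp_le_one_iff.2 (by linarith)
  have h2 : 1 - t ≤ exp (-t) := by linarith [add_one_le_exp (-t)]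
  rw [norm_eq_abs, ← mul_sub_one, abs_mul, abs_of_nonneg (pow_nonneg ht0 _),
    abs_of_nonpos (by linarith)]
  gcongr
  linarith

lemma abs_integral_lowerIncGamma_natCast_sub_le {Ω : Type*} [MeasurableSpace Ω] {μ : Measure Ω}
    {L : ℕ} (hL : 0 < L) {X : Ω → ℝ} (hXm : AEMeasurable X μ) (hX : ∀ᵐ ω ∂μ, 0 ≤ X ω)
    (hXL : Integrable (fun ω => X ω ^ L) μ) (hXL1 : Integrable (fun ω => X ω ^ (L + 1)) μ) :
    |∫ ω, lowerIncGamma L (X ω) ∂μ - (∫ ω, X ω ^ L ∂μ) / L|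
      ≤ (∫ ω, X ω ^ (L + 1) ∂μ) / (L + 1) := by
  have hγ : Integrable (fun ω => lowerIncGamma L (X ω)) μ := by
    refine ((hXL.div_const L).add (hXL1.div_const (L + 1))).mono'
      ((measurable_lowerIncGamma L).comp_aemeasurable hXm).aestronglyMeasurable ?_
    filter_upwards [hX] with ω hω
    rw [norm_eq_abs, abs_of_nonneg (lowerIncGamma_nonneg _ _), Pi.add_apply]
    linarith [(abs_le.1 (abs_lowerIncGamma_natCast_sub_le hL hω)).2]
  rw [← integral_div, ← integral_div, ← integral_sub hγ (hXL.div_const _)]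
  refine (abs_integral_le_integral_abs).trans
    (integral_mono_ae (hγ.sub (hXL.div_const _)).abs (hXL1.div_const _) ?_)
  filter_upwards [hX] with ω hω
  exact abs_lowerIncGamma_natCast_sub_le hL hω

lemma mul_rpow_neg_pow {w : ℝ} (hw : 0 ≤ w) (a δ : ℝ) (k : ℕ) :
    (a * w ^ (-δ)) ^ k = a ^ k * w ^ (-(δ * k)) := by
  rw [mul_pow, ← rpow_natCast (w ^ (-δ)), ← rpow_mul hw, neg_mul]

theorem outage_lower_bound_asymptotic_general
    {Ω : Type*} [MeasureSpace Ω]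
    (L : ℕ) (hL : 1 ≤ L) (δ c₂ : ℝ) (hc₂ : 0 < c₂)
    (W : Ω → ℝ) (hWm : Measurable W) (hWpos : ∀ ω, 0 < W ω)
    (hint : Integrable (fun ω => (W ω) ^ (-(δ * L))) ℙ)
    (hint' : Integrable (fun ω => (W ω) ^ (-(δ * (L + 1)))) ℙ) :
    (fun lam : ℝ =>
        (∫ ω, lowerIncGamma L (c₂ * lam * (W ω) ^ (-δ))) / Real.Gamma L
          - c₂ ^ L * (∫ ω, (W ω) ^ (-(δ * L))) / Real.Gamma (L + 1) * lam ^ L)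
      =O[𝓝[>] 0] fun lam => lam ^ (L + 1) := by
  have hΓ : 0 < Gamma L := Gamma_pos_of_pos (by positivity)
  refine isBigO_iff.2 ⟨c₂ ^ (L + 1) * (∫ ω, W ω ^ (-(δ * (L + 1)))) / ((L + 1) * Gamma L), ?_⟩
  filter_upwards [self_mem_nhdsWithin] with lam (hlam : 0 < lam)
  have hpow (k : ℕ) : (fun ω => (c₂ * lam * W ω ^ (-δ)) ^ k)
      = fun ω => (c₂ * lam) ^ k * W ω ^ (-(δ * k)) :=
    funext fun ω => mul_rpow_neg_pow (hWpos ω).le _ _ _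
  have hbound := abs_integral_lowerIncGamma_natCast_sub_le (μ := ℙ) hL
    (X := fun ω => c₂ * lam * W ω ^ (-δ)) ((hWm.pow_const _).const_mul _).aemeasurable
    (ae_of_all _ fun ω => by have := hWpos ω; positivity)
    (by rw [hpow]; exact hint.const_mul _) (by rw [hpow]; push_cast; exact hint'.const_mul _)
  rw [hpow, hpow, integral_const_mul, integral_const_mul] at hbound
  push_cast at hbound
  rw [Gamma_add_one (by positivity), norm_eq_abs, norm_eq_abs,
    abs_of_nonneg (by positivity : (0 : ℝ) ≤ lam ^ (L + 1))]
  calc _ = |((∫ ω, lowerIncGamma L (c₂ * lam * W ω ^ (-δ)))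
          - (c₂ * lam) ^ L * (∫ ω, W ω ^ (-(δ * L))) / L) / Gamma L| := by
        congr 1; field_simp; ring
    _ ≤ (c₂ * lam) ^ (L + 1) * (∫ ω, W ω ^ (-(δ * (L + 1)))) / (L + 1) / Gamma L := by
        rw [abs_div, abs_of_pos hΓ]; gcongr
    _ = _ := by field_simp; ring

/-- with `P(λ) = E[γ(L, c₂ λ W^{-δ})]/Γ(L)`,
`P(λ) = (c₂^L E[W^{-δL}]/Γ(L+1)) λ^L + O(λ^{L+1})` as `λ → 0⁺`. -/
theorem outage_lower_bound_asymptotic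
    {Ω : Type*} [MeasureSpace Ω] [IsProbabilityMeasure (ℙ : Measure Ω)]
    (L : ℕ) (hL : 1 ≤ L) (δ c₂ : ℝ) (hδ : 0 < δ) (hδ1 : δ < 1) (hc₂ : 0 < c₂)
    (W : Ω → ℝ) (hWm : Measurable W) (hWpos : ∀ ω, 0 < W ω)
    (hint : Integrable (fun ω => (W ω) ^ (-(δ * L))) ℙ)
    (hint' : Integrable (fun ω => (W ω) ^ (-(δ * (L + 1)))) ℙ) :
    (fun lam : ℝ =>
        (∫ ω, lowerIncGamma L (c₂ * lam * (W ω) ^ (-δ))) / Real.Gamma L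
          - c₂ ^ L * (∫ ω, (W ω) ^ (-(δ * L))) / Real.Gamma (L + 1) * lam ^ L)
      =O[𝓝[>] 0] fun lam => lam ^ (L + 1) :=
  outage_lower_bound_asymptotic_general L hL δ c₂ hc₂ W hWm hWpos hint hint'
end
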